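/- arXiv:1407.6208 — 6 statements merged into one kernel-verified Lean document; each statement's English description precedes it below -/
import Mathlib

section
/- Let t ∈ ℝ, r ≥ 1, and let S_r be as in the context, and set C₀ := max{8, 16/λ̲}. Then for every s with t ≤ s ≤ t + 2 and every v ∈ H^t, ‖B^{−1}v − S_r(B)v‖_s ≤ C₀ · e^{−(2−(s−t))·π·√r/2} · ‖v‖_t; equivalently, for every ξ ∈ [0,2] and every v ∈ H^t, ( Σ_{ν∈ℕ^d} λ_ν^{t+ξ} · (λ_ν^{−1} − S_r(λ_ν))² · v_ν² )^{1/2} ≤ C₀ · e^{−(2−ξ)·π·√r/2} · ‖v‖_t. -/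
open scoped ENNReal
open Filter

/-- `λ_ν = λ_{1,ν_1} + ⋯ + λ_{d,ν_d}` (indices `0`-based in Lean, `1`-based in the paper). -/
noncomputable def lamNu (d : ℕ) (lam : Fin d → ℕ → ℝ) (ν : Fin d → ℕ) : ℝ :=
  ∑ j, lam j (ν j)

/-- The `H^s` norm `(Σ_ν λ_ν^s v_ν²)^{1/2}`, as an extended nonnegative real. -/
noncomputable def hnorm (d : ℕ) (lam : Fin d → ℕ → ℝ) (s : ℝ) (v : (Fin d → ℕ) → ℝ) : ℝ≥0∞ :=
  (∑' ν : Fin d → ℕ, ENNReal.ofReal (lamNu d lam ν ^ s * v ν ^ 2)) ^ (1 / 2 : ℝ)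

/-- membership in `H^s`. -/
def MemH (d : ℕ) (lam : Fin d → ℕ → ℝ) (s : ℝ) (v : (Fin d → ℕ) → ℝ) : Prop :=
  hnorm d lam s v < ⊤

/-- `λ̲ = λ_{(1,…,1)}`, the smallest of the `λ_ν`. -/
noncomputable def lamMin (d : ℕ) (lam : Fin d → ℕ → ℝ) : ℝ := lamNu d lam (fun _ => 0)

/-- A rank-one tensor: `τ_ν = ∏_j c_j(ν_j)`. -/
def IsRankOne (d : ℕ) (τ : (Fin d → ℕ) → ℝ) : Prop :=
  ∃ c : Fin d → ℕ → ℝ, ∀ ν, τ ν = ∏ j, c j (ν j)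

/-! The error multiplier `x ↦ 1/x − S_r(x)` is estimated in two regimes separated by
`x = e^{π√r}/8`. Below it, `x^ξ ≤ e^{ξπ√r}` and the uniform bound `|1/x − S_r(x)| ≤ C₀ e^{−π√r}`
give `x^ξ (1/x − S_r(x))² ≤ C₀² e^{−(2−ξ)π√r}`. Above it, `0 ≤ 1/x − S_r(x) ≤ 1/x`, so
`x^ξ (1/x − S_r(x))² ≤ x^{ξ−2} ≤ 8^{2−ξ} e^{−(2−ξ)π√r} ≤ 64 e^{−(2−ξ)π√r}`. As `B` is diagonal,
the squared operator norm from `H^t` to `H^s` is `sup_ν λ_ν^{s−t} (1/λ_ν − S_r(λ_ν))²`. -/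

open Real

lemma one_div_eight_mul_exp_rpow (R p : ℝ) :
    (1 / 8 * exp R) ^ p = exp (p * R) / 8 ^ p := by
  rw [mul_rpow (by norm_num) (exp_pos R).le, div_rpow zero_le_one (by norm_num), one_rpow,
    ← exp_mul, mul_comm R p, one_div_mul_eq_div]

lemma rpow_mul_sq_le_of_le_one_div_eight_mul_exp {x e ξ R C : ℝ} (hx : 0 < x)
    (hxR : x ≤ 1 / 8 * exp R) (hξ : 0 ≤ ξ) (he : |e| ≤ C * exp (-R)) :
    x ^ ξ * e ^ 2 ≤ C ^ 2 * exp (-(2 - ξ) * R) := by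
  have he2 : e ^ 2 ≤ (C * exp (-R)) ^ 2 := sq_le_sq' (abs_le.mp he).1 (abs_le.mp he).2
  calc x ^ ξ * e ^ 2 ≤ (1 / 8 * exp R) ^ ξ * (C * exp (-R)) ^ 2 := by gcongr
    _ = exp (ξ * R) / 8 ^ ξ * (C * exp (-R)) ^ 2 := by rw [one_div_eight_mul_exp_rpow]
    _ ≤ exp (ξ * R) * (C * exp (-R)) ^ 2 := by
        gcongr
        exact div_le_self (exp_pos _).le (one_le_rpow (by norm_num) hξ)
    _ = C ^ 2 * (exp (ξ * R) * exp (-R) * exp (-R)) := by ring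
    _ = C ^ 2 * exp (-(2 - ξ) * R) := by
        rw [← exp_add, ← exp_add]
        ring_nf

lemma rpow_mul_sq_le_of_one_div_eight_mul_exp_le {x e ξ R : ℝ}
    (hxR : 1 / 8 * exp R ≤ x) (hξ₀ : 0 ≤ ξ) (hξ₂ : ξ ≤ 2) (he₀ : 0 ≤ e) (he : e ≤ 1 / x) :
    x ^ ξ * e ^ 2 ≤ 64 * exp (-(2 - ξ) * R) := by
  have hx : 0 < x := (by positivity : (0 : ℝ) < 1 / 8 * exp R).trans_le hxR
  calc x ^ ξ * e ^ 2 ≤ x ^ ξ * (1 / x) ^ 2 := by gcongr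
    _ = x ^ (ξ - 2) := by
        rw [rpow_sub hx, rpow_two]
        field_simp
    _ ≤ (1 / 8 * exp R) ^ (ξ - 2) := rpow_le_rpow_of_nonpos (by positivity) hxR (by linarith)
    _ = exp ((ξ - 2) * R) / 8 ^ (ξ - 2) := one_div_eight_mul_exp_rpow R _
    _ ≤ 64 * exp (-(2 - ξ) * R) := by
        have h8 : (8 : ℝ) ^ (-2 : ℝ) ≤ 8 ^ (ξ - 2) :=
          rpow_le_rpow_of_exponent_le (by norm_num) (by linarith)
        rw [div_le_iff₀ (by positivity), neg_sub]
        norm_num at h8 ⊢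
        nlinarith [exp_pos ((ξ - 2) * R)]

lemma rpow_mul_sq_one_div_sub_le {m x S ξ R : ℝ} (hm : 0 < m) (hmx : m ≤ x) (hS : 0 ≤ S)
    (h_unif : |1 / x - S| ≤ 16 / m * exp (-R)) (h_tail : 1 / 8 * exp R ≤ x → S ≤ 1 / x)
    (hξ₀ : 0 ≤ ξ) (hξ₂ : ξ ≤ 2) :
    x ^ ξ * (1 / x - S) ^ 2 ≤ max 8 (16 / m) ^ 2 * exp (-(2 - ξ) * R) := by
  rcases le_or_gt x (1 / 8 * exp R) with hxR | hxR
  · refine rpow_mul_sq_le_of_le_one_div_eight_mul_exp (hm.trans_le hmx) hxR hξ₀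
      (h_unif.trans ?_)
    gcongr
    exact le_max_right _ _
  · have hS_le := h_tail hxR.le
    calc x ^ ξ * (1 / x - S) ^ 2 ≤ 64 * exp (-(2 - ξ) * R) :=
          rpow_mul_sq_le_of_one_div_eight_mul_exp_le hxR.le hξ₀ hξ₂ (by linarith) (by linarith)
      _ ≤ max 8 (16 / m) ^ 2 * exp (-(2 - ξ) * R) := by
          gcongr
          nlinarith [le_max_left 8 (16 / m)]

section SequenceModel

variable {d : ℕ} {lam : Fin d → ℕ → ℝ}

lemma lamMin_pos (hd : 0 < d) (hpos : ∀ j n, 0 < lam j n) : 0 < lamMin d lam :=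
  Finset.sum_pos (fun j _ => hpos j 0) (Finset.univ_nonempty_iff.mpr ⟨⟨0, hd⟩⟩)

lemma lamMin_le_lamNu (hmono : ∀ j, Monotone (lam j)) (ν : Fin d → ℕ) :
    lamMin d lam ≤ lamNu d lam ν := by
  unfold lamMin lamNu
  exact Finset.sum_le_sum fun j _ => hmono j (Nat.zero_le (ν j))

lemma hnorm_mul_le {s t K : ℝ} {m v : (Fin d → ℕ) → ℝ} (hlam : ∀ ν, 0 < lamNu d lam ν)
    (hK : 0 ≤ K) (hm : ∀ ν, lamNu d lam ν ^ (s - t) * m ν ^ 2 ≤ K ^ 2) :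
    hnorm d lam s (fun ν => m ν * v ν) ≤ ENNReal.ofReal K * hnorm d lam t v := by
  have hterm : ∀ ν, ENNReal.ofReal (lamNu d lam ν ^ s * (m ν * v ν) ^ 2)
      ≤ ENNReal.ofReal (K ^ 2) * ENNReal.ofReal (lamNu d lam ν ^ t * v ν ^ 2) := by
    intro ν
    rw [← ENNReal.ofReal_mul (sq_nonneg K)]
    refine ENNReal.ofReal_le_ofReal ?_
    calc lamNu d lam ν ^ s * (m ν * v ν) ^ 2
        = (lamNu d lam ν ^ (s - t) * m ν ^ 2) * (lamNu d lam ν ^ t * v ν ^ 2) := by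
          rw [← sub_add_cancel s t, rpow_add (hlam ν), add_sub_cancel_right]
          ring
      _ ≤ K ^ 2 * (lamNu d lam ν ^ t * v ν ^ 2) := by
          gcongr
          · exact mul_nonneg (rpow_pos_of_pos (hlam ν) t).le (sq_nonneg _)
          · exact hm ν
  have hroot : ENNReal.ofReal (K ^ 2) ^ (1 / 2 : ℝ) = ENNReal.ofReal K := by
    rw [ENNReal.ofReal_rpow_of_nonneg (sq_nonneg K) (by norm_num), one_div,
      ← rpow_natCast_mul hK, Nat.cast_ofNat, mul_inv_cancel₀ two_ne_zero, rpow_one]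
  unfold hnorm
  calc (∑' ν, ENNReal.ofReal (lamNu d lam ν ^ s * (m ν * v ν) ^ 2)) ^ (1 / 2 : ℝ)
      ≤ (∑' ν, ENNReal.ofReal (K ^ 2) * ENNReal.ofReal (lamNu d lam ν ^ t * v ν ^ 2))
          ^ (1 / 2 : ℝ) := by
        gcongr with ν
        exact hterm ν
    _ = ENNReal.ofReal K * (∑' ν, ENNReal.ofReal (lamNu d lam ν ^ t * v ν ^ 2))
          ^ (1 / 2 : ℝ) := by
        rw [ENNReal.tsum_mul_left, ENNReal.mul_rpow_of_nonneg _ _ (by norm_num), hroot]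

end SequenceModel

theorem approximate_inverse_error_general
    (d : ℕ) (hd : 0 < d) (lam : Fin d → ℕ → ℝ)
    (hpos : ∀ j n, 0 < lam j n) (hmono : ∀ j, Monotone (lam j))
    (r : ℕ) (ω a : Fin r → ℝ)
    (hω : ∀ k, 0 < ω k)
    (hS1 : ∀ x : ℝ, lamMin d lam ≤ x →
      |1 / x - ∑ k, ω k * Real.exp (-(a k) * x)|
        ≤ (16 / lamMin d lam) * Real.exp (-Real.pi * Real.sqrt r))
    (hS2 : ∀ x : ℝ, (1 / 8) * Real.exp (Real.pi * Real.sqrt r) ≤ x →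
      ∑ k, ω k * Real.exp (-(a k) * x) ≤ 1 / x)
    (t : ℝ) :
    ∀ s : ℝ, t ≤ s → s ≤ t + 2 → ∀ v : (Fin d → ℕ) → ℝ,
      hnorm d lam s (fun ν =>
          v ν / lamNu d lam ν - (∑ k, ω k * Real.exp (-(a k) * lamNu d lam ν)) * v ν)
        ≤ ENNReal.ofReal (max 8 (16 / lamMin d lam) *
            Real.exp (-(2 - (s - t)) * Real.pi * Real.sqrt r / 2)) * hnorm d lam t v := by
  intro s hts hst v
  have hm := lamMin_pos hd hpos
  have hmin := lamMin_le_lamNu hmono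
  have hdiag : (fun ν => v ν / lamNu d lam ν - (∑ k, ω k * exp (-(a k) * lamNu d lam ν)) * v ν)
      = fun ν => (1 / lamNu d lam ν - ∑ k, ω k * exp (-(a k) * lamNu d lam ν)) * v ν := by
    funext ν
    ring
  rw [hdiag]
  refine hnorm_mul_le (fun ν => hm.trans_le (hmin ν)) (by positivity) fun ν => ?_
  calc _ ≤ max 8 (16 / lamMin d lam) ^ 2 * exp (-(2 - (s - t)) * (π * √r)) :=
        rpow_mul_sq_one_div_sub_le hm (hmin ν)
          (Finset.sum_nonneg fun k _ => (mul_pos (hω k) (exp_pos _)).le)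
          (neg_mul π √r ▸ hS1 _ (hmin ν)) (hS2 _) (by linarith) (by linarith)
    _ = _ := by
        rw [mul_pow, ← exp_nat_mul]
        push_cast
        ring_nf

/-- Proposition 5.5 (i)-(ii) of the paper: with
`C₀ = max{8, 16/λ̲}` and an exponential sum `S_r(x) = Σ_k ω_k e^{−α_k x}` satisfying
`|1/x − S_r(x)| ≤ (16/λ̲) e^{−π√r}` for `x ≥ λ̲` and `S_r(x) ≤ 1/x` for
`x ≥ (1/8)e^{π√r}`, one has, for `t ≤ s ≤ t+2` and `v ∈ H^t`,
`‖B⁻¹v − S_r(B)v‖_s ≤ C₀ e^{−(2−(s−t))π√r/2} ‖v‖_t`. -/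
theorem approximate_inverse_error
    (d : ℕ) (hd : 0 < d) (lam : Fin d → ℕ → ℝ)
    (hpos : ∀ j n, 0 < lam j n) (hmono : ∀ j, Monotone (lam j))
    (htend : ∀ j, Tendsto (lam j) atTop atTop)
    (r : ℕ) (hr : 1 ≤ r) (ω a : Fin r → ℝ)
    (hω : ∀ k, 0 < ω k) (ha : ∀ k, 0 < a k)
    (hS1 : ∀ x : ℝ, lamMin d lam ≤ x →
      |1 / x - ∑ k, ω k * Real.exp (-(a k) * x)|
        ≤ (16 / lamMin d lam) * Real.exp (-Real.pi * Real.sqrt r))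
    (hS2 : ∀ x : ℝ, (1 / 8) * Real.exp (Real.pi * Real.sqrt r) ≤ x →
      ∑ k, ω k * Real.exp (-(a k) * x) ≤ 1 / x)
    (t : ℝ) :
    ∀ s : ℝ, t ≤ s → s ≤ t + 2 → ∀ v : (Fin d → ℕ) → ℝ,
      hnorm d lam s (fun ν =>
          v ν / lamNu d lam ν - (∑ k, ω k * Real.exp (-(a k) * lamNu d lam ν)) * v ν)
        ≤ ENNReal.ofReal (max 8 (16 / lamMin d lam) *
            Real.exp (-(2 - (s - t)) * Real.pi * Real.sqrt r / 2)) * hnorm d lam t v :=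
  approximate_inverse_error_general d hd lam hpos hmono r ω a hω hS1 hS2 t
end

section
/- Let β > 0 and r ≥ 1, and suppose S_r(x) = Σ_{k=1}^r ω_k e^{−α_k x} with all ω_k > 0 and α_k > 0 satisfies |1/x − S_r(x)| ≤ (16/β)·e^{−π√r} for all x ≥ β and S_r(x) ≤ 1/x for all x ≥ T_r := (1/8)e^{π√r}. Define ω̄_k := ω_k if α_k > T_r^{−1} and ω̄_k := 0 otherwise, and set S̄_r(x) := Σ_{k=1}^r ω̄_k e^{−α_k x}. Then: (i) whenever ω̄_k > 0 one has α_k ≥ T_r^{−1}; (ii) S̄_r(x) ≤ S_r(x) ≤ S̄_r(x) + 8re·e^{−π√r} for all x > 0, and consequently |1/x − S̄_r(x)| ≤ (16/β + 8re)·e^{−π√r} for all x ≥ β; and (iii) S̄_r(x) ≤ 1/x for all x ≥ T_r. -/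
/-!
Every weight is positive, so at `x = T_r` each single term `ω_k e^{-α_k T_r}` is at most
`S_r(T_r) ≤ 1/T_r`. A dropped exponent has `α_k T_r ≤ 1`, hence its weight is at most
`e / T_r = 8e·e^{-π√r}`, and for `x > 0` the dropped terms together contribute at most `r` times
that. Dropping nonnegative terms can only lower the sum, so the one-sided bound `S_r ≤ 1/x` on
`[T_r, ∞)` survives thresholding.
-/

/-- `T_r = (1/8) e^{π√r}`. -/
noncomputable def Tr (r : ℕ) : ℝ := (1 / 8) * Real.exp (Real.pi * Real.sqrt r)

/-- The thresholded weights: `ω̄_k = ω_k` if `α_k > T_r⁻¹`, and `0` otherwise. -/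
noncomputable def omegaBar (r : ℕ) (ω a : Fin r → ℝ) (k : Fin r) : ℝ :=
  if (Tr r)⁻¹ < a k then ω k else 0

open Real Finset

section ExpSum

variable {ι : Type*} [Fintype ι]

noncomputable def expSum (ω a : ι → ℝ) (x : ℝ) : ℝ := ∑ k, ω k * exp (-(a k) * x)

theorem expSum_le_expSum_of_le {ω ω' a : ι → ℝ} (h : ∀ k, ω' k ≤ ω k) (x : ℝ) :
    expSum ω' a x ≤ expSum ω a x :=
  sum_le_sum fun k _ => mul_le_mul_of_nonneg_right (h k) (exp_pos _).le

theorem expSum_le_expSum_add {ω ω' a : ι → ℝ} {δ x : ℝ} (ha : ∀ k, 0 ≤ a k) (hx : 0 ≤ x)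
    (h : ∀ k, ω' k ≤ ω k) (hδ : ∀ k, ω k - ω' k ≤ δ) :
    expSum ω a x ≤ expSum ω' a x + Fintype.card ι * δ := by
  have hterm : ∀ k, (ω k - ω' k) * exp (-(a k) * x) ≤ δ := fun k =>
    calc (ω k - ω' k) * exp (-(a k) * x) ≤ (ω k - ω' k) * 1 := by
          gcongr
          · exact sub_nonneg.2 (h k)
          · exact exp_le_one_iff.2 (by nlinarith [ha k])
      _ ≤ δ := by rw [mul_one]; exact hδ k
  have hdiff : expSum ω a x - expSum ω' a x ≤ Fintype.card ι * δ :=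
    calc expSum ω a x - expSum ω' a x = ∑ k, (ω k - ω' k) * exp (-(a k) * x) := by
          simp only [expSum, ← sum_sub_distrib, sub_mul]
      _ ≤ ∑ _k : ι, δ := sum_le_sum fun k _ => hterm k
      _ = Fintype.card ι * δ := by rw [sum_const, card_univ, nsmul_eq_mul]
  linarith

theorem weight_le_of_expSum_le {ω a : ι → ℝ} {T : ℝ} (hω : ∀ k, 0 ≤ ω k) (hT : 0 < T)
    (hS : expSum ω a T ≤ 1 / T) {k : ι} (hk : a k ≤ T⁻¹) : ω k ≤ exp 1 / T := by
  have hsingle : ω k * exp (-(a k) * T) ≤ expSum ω a T :=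
    single_le_sum (f := fun j => ω j * exp (-(a j) * T))
      (fun j _ => mul_nonneg (hω j) (exp_pos _).le) (mem_univ k)
  have hakT : a k * T ≤ 1 := by rwa [← le_div_iff₀ hT, one_div]
  have hexp : exp (-1) ≤ exp (-(a k) * T) := exp_le_exp.2 (by linarith)
  have : ω k * exp (-1) ≤ 1 / T :=
    (mul_le_mul_of_nonneg_left hexp (hω k)).trans (hsingle.trans hS)
  rwa [exp_neg, ← div_eq_mul_inv, div_le_iff₀ (exp_pos 1), div_mul_eq_mul_div, one_mul] at this

end ExpSum

theorem abs_sub_le_add_of_le_of_le_add {f s t A B : ℝ} (hf : |f - s| ≤ A) (hts : t ≤ s)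
    (hst : s ≤ t + B) : |f - t| ≤ A + B := by
  rw [abs_sub_le_iff] at hf ⊢
  constructor <;> linarith [hf.1, hf.2]

theorem Tr_pos (r : ℕ) : 0 < Tr r := by
  unfold Tr; positivity

theorem inv_Tr (r : ℕ) : (Tr r)⁻¹ = 8 * exp (-π * √r) := by
  rw [Tr, neg_mul, exp_neg, mul_inv, one_div, inv_inv]

section omegaBar

variable {r : ℕ} {ω a : Fin r → ℝ}

theorem inv_Tr_le_of_omegaBar_pos {k : Fin r} (hk : 0 < omegaBar r ω a k) : (Tr r)⁻¹ ≤ a k := by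
  by_contra! h
  simp [omegaBar, not_lt.2 h.le] at hk

theorem omegaBar_le (hω : ∀ k, 0 ≤ ω k) (k : Fin r) : omegaBar r ω a k ≤ ω k := by
  unfold omegaBar
  split_ifs
  exacts [le_rfl, hω k]

theorem sub_omegaBar_le (hω : ∀ k, 0 ≤ ω k) (hS : expSum ω a (Tr r) ≤ 1 / Tr r) (k : Fin r) :
    ω k - omegaBar r ω a k ≤ 8 * exp 1 * exp (-π * √r) := by
  unfold omegaBar
  split_ifs with h
  · rw [sub_self]; positivity
  · have := weight_le_of_expSum_le hω (Tr_pos r) hS (not_lt.1 h)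
    rw [div_eq_mul_inv, inv_Tr] at this
    linarith

theorem expSum_omegaBar_le_and_le_add (hω : ∀ k, 0 ≤ ω k) (ha : ∀ k, 0 ≤ a k)
    (hS : expSum ω a (Tr r) ≤ 1 / Tr r) {x : ℝ} (hx : 0 ≤ x) :
    expSum (omegaBar r ω a) a x ≤ expSum ω a x ∧
      expSum ω a x ≤ expSum (omegaBar r ω a) a x + 8 * r * exp 1 * exp (-π * √r) :=
  ⟨expSum_le_expSum_of_le (omegaBar_le hω) x,
    (expSum_le_expSum_add ha hx (omegaBar_le hω) (sub_omegaBar_le hω hS)).trans_eq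
      (by rw [Fintype.card_fin]; ring)⟩

end omegaBar

theorem thresholded_exponential_sum_general
    (β : ℝ) (hβ : 0 < β) (r : ℕ)
    (ω a : Fin r → ℝ) (hω : ∀ k, 0 < ω k) (ha : ∀ k, 0 < a k)
    (h1 : ∀ x : ℝ, β ≤ x →
      |1 / x - ∑ k, ω k * Real.exp (-(a k) * x)|
        ≤ (16 / β) * Real.exp (-Real.pi * Real.sqrt r))
    (h2 : ∀ x : ℝ, Tr r ≤ x → ∑ k, ω k * Real.exp (-(a k) * x) ≤ 1 / x) :
    (∀ k, 0 < omegaBar r ω a k → (Tr r)⁻¹ ≤ a k) ∧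
    (∀ x : ℝ, 0 < x →
      (∑ k, omegaBar r ω a k * Real.exp (-(a k) * x))
          ≤ (∑ k, ω k * Real.exp (-(a k) * x)) ∧
      (∑ k, ω k * Real.exp (-(a k) * x))
          ≤ (∑ k, omegaBar r ω a k * Real.exp (-(a k) * x))
            + 8 * r * Real.exp 1 * Real.exp (-Real.pi * Real.sqrt r)) ∧
    (∀ x : ℝ, β ≤ x →
      |1 / x - ∑ k, omegaBar r ω a k * Real.exp (-(a k) * x)|
        ≤ (16 / β + 8 * r * Real.exp 1) * Real.exp (-Real.pi * Real.sqrt r)) ∧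
    (∀ x : ℝ, Tr r ≤ x →
      ∑ k, omegaBar r ω a k * Real.exp (-(a k) * x) ≤ 1 / x) := by
  have hsandwich : ∀ x : ℝ, 0 < x → _ := fun x hx =>
    expSum_omegaBar_le_and_le_add (fun k => (hω k).le) (fun k => (ha k).le) (h2 (Tr r) le_rfl) hx.le
  refine ⟨fun k => inv_Tr_le_of_omegaBar_pos, hsandwich, fun x hx => ?_, fun x hx => ?_⟩
  · obtain ⟨hlow, hhigh⟩ := hsandwich x (hβ.trans_le hx)
    exact (abs_sub_le_add_of_le_of_le_add (h1 x hx) hlow hhigh).trans_eq (by ring)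
  · exact (hsandwich x ((Tr_pos r).trans_le hx)).1.trans (h2 x hx)

theorem thresholded_exponential_sum
    (β : ℝ) (hβ : 0 < β) (r : ℕ) (hr : 1 ≤ r)
    (ω a : Fin r → ℝ) (hω : ∀ k, 0 < ω k) (ha : ∀ k, 0 < a k)
    (h1 : ∀ x : ℝ, β ≤ x →
      |1 / x - ∑ k, ω k * Real.exp (-(a k) * x)|
        ≤ (16 / β) * Real.exp (-Real.pi * Real.sqrt r))
    (h2 : ∀ x : ℝ, Tr r ≤ x → ∑ k, ω k * Real.exp (-(a k) * x) ≤ 1 / x) :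
    (∀ k, 0 < omegaBar r ω a k → (Tr r)⁻¹ ≤ a k) ∧
    (∀ x : ℝ, 0 < x →
      (∑ k, omegaBar r ω a k * Real.exp (-(a k) * x))
          ≤ (∑ k, ω k * Real.exp (-(a k) * x)) ∧
      (∑ k, ω k * Real.exp (-(a k) * x))
          ≤ (∑ k, omegaBar r ω a k * Real.exp (-(a k) * x))
            + 8 * r * Real.exp 1 * Real.exp (-Real.pi * Real.sqrt r)) ∧
    (∀ x : ℝ, β ≤ x →
      |1 / x - ∑ k, omegaBar r ω a k * Real.exp (-(a k) * x)|
        ≤ (16 / β + 8 * r * Real.exp 1) * Real.exp (-Real.pi * Real.sqrt r)) ∧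
    (∀ x : ℝ, Tr r ≤ x →
      ∑ k, omegaBar r ω a k * Real.exp (-(a k) * x) ≤ 1 / x) :=
  thresholded_exponential_sum_general β hβ r ω a hω ha h1 h2
end

section
/- Let s ≥ 0 and let τ be the rank-one tensor with factors c_1,…,c_d, i.e. τ_ν = ∏_{j=1}^d c_{j,ν_j}. Then, as inequalities in [0,∞], for each j ∈ {1,…,d}: ‖c_j‖_{H_j^s} · ∏_{i≠j} ‖c_i‖_{H_i^0} ≤ ‖τ‖_s, and ‖τ‖_s ≤ (d^{max{0,s−1}})^{1/2} · Σ_{j=1}^d ‖c_j‖_{H_j^s} · ∏_{i≠j} ‖c_i‖_{H_i^0}. In particular, τ ∈ H^s if and only if there is a choice of factors c_1,…,c_d representing τ with c_j ∈ H_j^s for every j. -/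
open scoped ENNReal
open Filter

/-- The low-dimensional `H_j^s` norm `(Σ_n λ_{j,n}^s c_n²)^{1/2}`. -/
noncomputable def hjnorm (d : ℕ) (lam : Fin d → ℕ → ℝ) (j : Fin d) (s : ℝ)
    (c : ℕ → ℝ) : ℝ≥0∞ :=
  (∑' n : ℕ, ENNReal.ofReal (lam j n ^ s * c n ^ 2)) ^ (1 / 2 : ℝ)

/-! The weight `λ_ν^s` is squeezed between `λ_{j,ν_j}^s` (for each `j`) and
`d^{max(0,s-1)} Σ_j λ_{j,ν_j}^s`, by `λ_{j,ν_j} ≤ λ_ν` and the power-mean inequality. For a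
rank-one tensor the sum `Σ_ν λ_{j,ν_j}^s τ_ν²` factorizes as
`‖c_j‖²_{H_j^s} ∏_{i≠j} ‖c_i‖²_{H_i^0}`, and subadditivity of the square root gives both bounds.
For the characterization: if some factor vanishes then `τ = 0`; otherwise every `‖c_i‖_{H_i^0}`
is nonzero and the lower bound makes each `‖c_j‖_{H_j^s}` finite. Conversely,
monotonicity of `λ_j` gives `‖c‖_{H_j^0} ≤ λ_{j,1}^{-s/2} ‖c‖_{H_j^s}`. -/

namespace ENNReal

theorem tsum_pi_prod_eq_prod_tsum {α : Type*} :
    ∀ {d : ℕ} (f : Fin d → α → ℝ≥0∞), ∑' ν : Fin d → α, ∏ j, f j (ν j) = ∏ j, ∑' a, f j a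
  | 0, _ => by simp
  | d + 1, f => by
    rw [← (Fin.consEquiv fun _ => α).tsum_eq, ENNReal.tsum_prod']
    simp only [Fin.consEquiv_apply, Fin.prod_univ_succ, Fin.cons_zero, Fin.cons_succ,
      ENNReal.tsum_mul_left, ENNReal.tsum_mul_right, tsum_pi_prod_eq_prod_tsum]

theorem rpow_sum_le_sum_rpow {ι : Type*} {s : Finset ι} (hs : s.Nonempty) (f : ι → ℝ≥0∞)
    {p : ℝ} (hp0 : 0 ≤ p) (hp1 : p ≤ 1) : (∑ i ∈ s, f i) ^ p ≤ ∑ i ∈ s, f i ^ p := by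
  induction hs using Finset.Nonempty.cons_induction with
  | singleton _ => simp
  | cons _ _ _ _ ih =>
    rw [Finset.sum_cons, Finset.sum_cons]
    exact (rpow_add_le_add_rpow _ _ hp0 hp1).trans (add_le_add le_rfl ih)

theorem rpow_sum_le_card_rpow_mul_sum_rpow {ι : Type*} {s : Finset ι} (hs : s.Nonempty)
    (f : ι → ℝ≥0∞) {p : ℝ} (hp : 0 ≤ p) :
    (∑ i ∈ s, f i) ^ p ≤ (s.card : ℝ≥0∞) ^ max 0 (p - 1) * ∑ i ∈ s, f i ^ p := by
  rcases le_total p 1 with hp1 | hp1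
  · rw [max_eq_left (by linarith), rpow_zero, one_mul]
    exact rpow_sum_le_sum_rpow hs f hp hp1
  · rw [max_eq_right (by linarith)]
    exact rpow_sum_le_const_mul_sum_rpow _ _ hp1

end ENNReal

def rankOneTensor {d : ℕ} (c : Fin d → ℕ → ℝ) : (Fin d → ℕ) → ℝ := fun ν => ∏ j, c j (ν j)

noncomputable def partialHnorm (d : ℕ) (lam : Fin d → ℕ → ℝ) (j : Fin d) (s : ℝ)
    (v : (Fin d → ℕ) → ℝ) : ℝ≥0∞ :=
  (∑' ν : Fin d → ℕ, ENNReal.ofReal (lam j (ν j) ^ s * v ν ^ 2)) ^ (1 / 2 : ℝ)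

section

variable {d : ℕ} {lam : Fin d → ℕ → ℝ} {s : ℝ}

theorem partialHnorm_le_hnorm (hlam : ∀ j n, 0 ≤ lam j n) (hs : 0 ≤ s) (j : Fin d)
    (v : (Fin d → ℕ) → ℝ) : partialHnorm d lam j s v ≤ hnorm d lam s v := by
  refine ENNReal.rpow_le_rpow (ENNReal.tsum_le_tsum fun ν => ?_) (by norm_num)
  refine ENNReal.ofReal_le_ofReal (mul_le_mul_of_nonneg_right ?_ (sq_nonneg _))
  exact Real.rpow_le_rpow (hlam j (ν j))
    (Finset.single_le_sum (fun i _ => hlam i (ν i)) (Finset.mem_univ j)) hs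

theorem lamNu_nonneg (hlam : ∀ j n, 0 ≤ lam j n) (ν : Fin d → ℕ) : 0 ≤ lamNu d lam ν :=
  Finset.sum_nonneg fun j _ => hlam j (ν j)

theorem ofReal_lamNu_rpow_le [NeZero d] (hlam : ∀ j n, 0 ≤ lam j n) (hs : 0 ≤ s)
    (ν : Fin d → ℕ) :
    ENNReal.ofReal (lamNu d lam ν ^ s)
      ≤ (d : ℝ≥0∞) ^ max 0 (s - 1) * ∑ j, ENNReal.ofReal (lam j (ν j) ^ s) := by
  have hsum : ENNReal.ofReal (lamNu d lam ν) = ∑ j, ENNReal.ofReal (lam j (ν j)) :=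
    ENNReal.ofReal_sum_of_nonneg fun j _ => hlam j (ν j)
  rw [← ENNReal.ofReal_rpow_of_nonneg (lamNu_nonneg hlam ν) hs, hsum]
  simp only [← ENNReal.ofReal_rpow_of_nonneg (hlam _ _) hs]
  simpa using ENNReal.rpow_sum_le_card_rpow_mul_sum_rpow Finset.univ_nonempty
    (fun j => ENNReal.ofReal (lam j (ν j))) hs

theorem hnorm_le_sum_partialHnorm [NeZero d] (hlam : ∀ j n, 0 ≤ lam j n) (hs : 0 ≤ s)
    (v : (Fin d → ℕ) → ℝ) :
    hnorm d lam s v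
      ≤ ENNReal.ofReal (((d : ℝ) ^ max 0 (s - 1)) ^ ((1 : ℝ) / 2)) *
          ∑ j, partialHnorm d lam j s v := by
  set C : ℝ≥0∞ := (d : ℝ≥0∞) ^ max 0 (s - 1)
  have hC : ENNReal.ofReal (((d : ℝ) ^ max 0 (s - 1)) ^ ((1 : ℝ) / 2)) = C ^ ((1 : ℝ) / 2) := by
    rw [← ENNReal.ofReal_rpow_of_nonneg (by positivity) (by norm_num),
      ← ENNReal.ofReal_rpow_of_nonneg (by positivity) (le_max_left _ _), ENNReal.ofReal_natCast]
  have hsq : (∑' ν, ENNReal.ofReal (lamNu d lam ν ^ s * v ν ^ 2))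
      ≤ C * ∑ j, ∑' ν, ENNReal.ofReal (lam j (ν j) ^ s * v ν ^ 2) := by
    rw [← Summable.tsum_finsetSum fun j _ => ENNReal.summable, ← ENNReal.tsum_mul_left]
    refine ENNReal.tsum_le_tsum fun ν => ?_
    simp only [ENNReal.ofReal_mul (Real.rpow_nonneg (hlam _ _) s),
      ENNReal.ofReal_mul (Real.rpow_nonneg (lamNu_nonneg hlam ν) s), ← Finset.sum_mul, ← mul_assoc]
    exact mul_le_mul_left (ofReal_lamNu_rpow_le hlam hs ν) _
  calc hnorm d lam s v
      ≤ (C * ∑ j, ∑' ν, ENNReal.ofReal (lam j (ν j) ^ s * v ν ^ 2)) ^ ((1 : ℝ) / 2) :=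
        ENNReal.rpow_le_rpow hsq (by norm_num)
    _ = C ^ ((1 : ℝ) / 2) *
          (∑ j, ∑' ν, ENNReal.ofReal (lam j (ν j) ^ s * v ν ^ 2)) ^ ((1 : ℝ) / 2) :=
        ENNReal.mul_rpow_of_nonneg _ _ (by norm_num)
    _ ≤ _ := by
        rw [hC]
        exact mul_le_mul_right
          (ENNReal.rpow_sum_le_sum_rpow Finset.univ_nonempty _ (by norm_num) (by norm_num)) _

theorem partialHnorm_rankOneTensor (hlam : ∀ j n, 0 ≤ lam j n) (j : Fin d)
    (c : Fin d → ℕ → ℝ) :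
    partialHnorm d lam j s (rankOneTensor c)
      = hjnorm d lam j s (c j) * ∏ i ∈ Finset.univ.erase j, hjnorm d lam i 0 (c i) := by
  set e : Fin d → ℝ := Pi.single j s
  have hterm : ∀ ν : Fin d → ℕ, ENNReal.ofReal (lam j (ν j) ^ s * rankOneTensor c ν ^ 2)
      = ∏ i, ENNReal.ofReal (lam i (ν i) ^ e i * c i (ν i) ^ 2) := by
    intro ν
    rw [← ENNReal.ofReal_prod_of_nonneg fun i _ =>
      mul_nonneg (Real.rpow_nonneg (hlam i (ν i)) _) (sq_nonneg _), Finset.prod_mul_distrib,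
      Finset.prod_pow, ← Finset.mul_prod_erase _ _ (Finset.mem_univ j)]
    congr 2
    rw [Finset.prod_eq_one fun i hi => ?_]
    · simp [e]
    · simp [e, Pi.single_eq_of_ne (Finset.ne_of_mem_erase hi)]
  have hexp : hjnorm d lam j s (c j) * ∏ i ∈ Finset.univ.erase j, hjnorm d lam i 0 (c i)
      = ∏ i, hjnorm d lam i (e i) (c i) := by
    rw [← Finset.mul_prod_erase _ _ (Finset.mem_univ j)]
    congr 1
    · simp [e]
    · exact Finset.prod_congr rfl fun i hi => by
        simp [e, Pi.single_eq_of_ne (Finset.ne_of_mem_erase hi)]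
  rw [hexp, partialHnorm, tsum_congr hterm,
    ENNReal.tsum_pi_prod_eq_prod_tsum fun i n => ENNReal.ofReal (lam i n ^ e i * c i n ^ 2),
    ← ENNReal.prod_rpow_of_nonneg (by norm_num)]
  rfl

theorem hjnorm_ne_zero {j : Fin d} (hpos : ∀ n, 0 < lam j n) {c : ℕ → ℝ} (hc : c ≠ 0) (σ : ℝ) :
    hjnorm d lam j σ c ≠ 0 := by
  obtain ⟨n, hn⟩ := Function.ne_iff.mp hc
  have hterm : 0 < ENNReal.ofReal (lam j n ^ σ * c n ^ 2) :=
    ENNReal.ofReal_pos.mpr (mul_pos (Real.rpow_pos_of_pos (hpos n) σ) (sq_pos_of_ne_zero hn))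
  exact (ENNReal.rpow_pos_of_nonneg (hterm.trans_le (ENNReal.le_tsum n)) (by norm_num)).ne'

theorem hjnorm_zero_lt_top {j : Fin d} (hpos : 0 < lam j 0) (hmono : Monotone (lam j))
    (hs : 0 ≤ s) {c : ℕ → ℝ} (hc : hjnorm d lam j s c < ⊤) : hjnorm d lam j 0 c < ⊤ := by
  rw [hjnorm, ENNReal.rpow_lt_top_iff_of_pos (by norm_num)] at hc ⊢
  have hterm : ∀ n, ENNReal.ofReal (lam j n ^ (0 : ℝ) * c n ^ 2)
      ≤ ENNReal.ofReal ((lam j 0 ^ s)⁻¹) * ENNReal.ofReal (lam j n ^ s * c n ^ 2) := by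
    intro n
    have hmin : 0 < lam j 0 ^ s := Real.rpow_pos_of_pos hpos s
    rw [← ENNReal.ofReal_mul (inv_nonneg.mpr hmin.le), Real.rpow_zero, one_mul]
    refine ENNReal.ofReal_le_ofReal ((le_inv_mul_iff₀ hmin).mpr ?_)
    refine mul_le_mul_of_nonneg_right ?_ (sq_nonneg _)
    exact Real.rpow_le_rpow hpos.le (hmono (Nat.zero_le n)) hs
  calc (∑' n, ENNReal.ofReal (lam j n ^ (0 : ℝ) * c n ^ 2))
      ≤ ENNReal.ofReal ((lam j 0 ^ s)⁻¹) * ∑' n, ENNReal.ofReal (lam j n ^ s * c n ^ 2) := by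
        rw [← ENNReal.tsum_mul_left]
        exact ENNReal.tsum_le_tsum hterm
    _ < ⊤ := ENNReal.mul_lt_top ENNReal.ofReal_lt_top hc

theorem hnorm_rankOneTensor_lt_top [NeZero d] (hpos : ∀ j n, 0 < lam j n)
    (hmono : ∀ j, Monotone (lam j)) (hs : 0 ≤ s) {c : Fin d → ℕ → ℝ}
    (hc : ∀ j, hjnorm d lam j s (c j) < ⊤) : hnorm d lam s (rankOneTensor c) < ⊤ := by
  have hlam : ∀ j n, 0 ≤ lam j n := fun j n => (hpos j n).le
  refine (hnorm_le_sum_partialHnorm hlam hs _).trans_lt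
    (ENNReal.mul_lt_top ENNReal.ofReal_lt_top (ENNReal.sum_lt_top.mpr fun j _ => ?_))
  rw [partialHnorm_rankOneTensor hlam]
  exact ENNReal.mul_lt_top (hc j)
    (ENNReal.prod_lt_top fun i _ => hjnorm_zero_lt_top (hpos i 0) (hmono i) hs (hc i))

theorem exists_factors_hjnorm_lt_top [NeZero d] (hpos : ∀ j n, 0 < lam j n) (hs : 0 ≤ s)
    {c : Fin d → ℕ → ℝ} (hτ : hnorm d lam s (rankOneTensor c) < ⊤) :
    ∃ c' : Fin d → ℕ → ℝ, rankOneTensor c' = rankOneTensor c ∧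
      ∀ j, hjnorm d lam j s (c' j) < ⊤ := by
  have hlam : ∀ j n, 0 ≤ lam j n := fun j n => (hpos j n).le
  by_cases hc : ∀ j, c j ≠ 0
  · refine ⟨c, rfl, fun j => ?_⟩
    have hprod : ∏ i ∈ Finset.univ.erase j, hjnorm d lam i 0 (c i) ≠ 0 :=
      Finset.prod_ne_zero_iff.mpr fun i _ => hjnorm_ne_zero (hpos i) (hc i) 0
    refine ENNReal.lt_top_of_mul_ne_top_left ?_ hprod
    rw [← partialHnorm_rankOneTensor hlam]
    exact ((partialHnorm_le_hnorm hlam hs j _).trans_lt hτ).ne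
  · push Not at hc
    obtain ⟨j, hj⟩ := hc
    refine ⟨0, funext fun ν => ?_, fun i => by simp [hjnorm]⟩
    simp [rankOneTensor, hj, Finset.prod_eq_zero (Finset.mem_univ j)]

end

theorem rank_one_tensor_norm_bounds_general
    (d : ℕ) (hd : 0 < d) (lam : Fin d → ℕ → ℝ)
    (hpos : ∀ j n, 0 < lam j n) (hmono : ∀ j, Monotone (lam j))
    (s : ℝ) (hs : 0 ≤ s)
    (c : Fin d → ℕ → ℝ) (τ : (Fin d → ℕ) → ℝ)
    (hτ : ∀ ν, τ ν = ∏ j, c j (ν j)) :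
    (∀ j : Fin d,
      hjnorm d lam j s (c j) * ∏ i ∈ Finset.univ.erase j, hjnorm d lam i 0 (c i)
        ≤ hnorm d lam s τ) ∧
    (hnorm d lam s τ
      ≤ ENNReal.ofReal (((d : ℝ) ^ max 0 (s - 1)) ^ ((1 : ℝ) / 2)) *
          ∑ j : Fin d,
            hjnorm d lam j s (c j) * ∏ i ∈ Finset.univ.erase j, hjnorm d lam i 0 (c i)) ∧
    (hnorm d lam s τ < ⊤ ↔
      ∃ c' : Fin d → ℕ → ℝ, (∀ ν, τ ν = ∏ j, c' j (ν j)) ∧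
        ∀ j, hjnorm d lam j s (c' j) < ⊤) := by
  have : NeZero d := ⟨hd.ne'⟩
  have hlam : ∀ j n, 0 ≤ lam j n := fun j n => (hpos j n).le
  obtain rfl : τ = rankOneTensor c := funext hτ
  refine ⟨fun j => ?_, ?_, fun hfin => ?_, fun ⟨c', hc', hfin⟩ => ?_⟩
  · rw [← partialHnorm_rankOneTensor hlam]
    exact partialHnorm_le_hnorm hlam hs j _
  · simpa only [partialHnorm_rankOneTensor hlam] using
      hnorm_le_sum_partialHnorm hlam hs (rankOneTensor c)
  · obtain ⟨c', hc', hfin'⟩ := exists_factors_hjnorm_lt_top hpos hs hfin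
    exact ⟨c', congrFun hc'.symm, hfin'⟩
  · rw [show rankOneTensor c = rankOneTensor c' from funext hc']
    exact hnorm_rankOneTensor_lt_top hpos hmono hs hfin

/-- Lemma 3.2 of the paper: for `s ≥ 0` and a rank-one tensor
`τ_ν = ∏_j c_j(ν_j)`,
`‖c_j‖_{H_j^s} ∏_{i≠j} ‖c_i‖_{H_i^0} ≤ ‖τ‖_s ≤ (d^{max{0,s−1}})^{1/2} Σ_j ‖c_j‖_{H_j^s} ∏_{i≠j} ‖c_i‖_{H_i^0}`,
and `τ ∈ H^s` iff `τ` admits a representation with all factors in `H_j^s`. -/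
theorem rank_one_tensor_norm_bounds
    (d : ℕ) (hd : 0 < d) (lam : Fin d → ℕ → ℝ)
    (hpos : ∀ j n, 0 < lam j n) (hmono : ∀ j, Monotone (lam j))
    (htend : ∀ j, Tendsto (lam j) atTop atTop)
    (s : ℝ) (hs : 0 ≤ s)
    (c : Fin d → ℕ → ℝ) (τ : (Fin d → ℕ) → ℝ)
    (hτ : ∀ ν, τ ν = ∏ j, c j (ν j)) :
    (∀ j : Fin d,
      hjnorm d lam j s (c j) * ∏ i ∈ Finset.univ.erase j, hjnorm d lam i 0 (c i)
        ≤ hnorm d lam s τ) ∧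
    (hnorm d lam s τ
      ≤ ENNReal.ofReal (((d : ℝ) ^ max 0 (s - 1)) ^ ((1 : ℝ) / 2)) *
          ∑ j : Fin d,
            hjnorm d lam j s (c j) * ∏ i ∈ Finset.univ.erase j, hjnorm d lam i 0 (c i)) ∧
    (hnorm d lam s τ < ⊤ ↔
      ∃ c' : Fin d → ℕ → ℝ, (∀ ν, τ ν = ∏ j, c' j (ν j)) ∧
        ∀ j, hjnorm d lam j s (c' j) < ⊤) :=
  rank_one_tensor_norm_bounds_general d hd lam hpos hmono s hs c τ hτ
end

section
/- Let s ≥ 0 and set λ₀ := min_{1≤j≤d} λ_{j,1} > 0 and C := (d/λ₀^{d−1})^{s/2}. Then every rank-one tensor τ with factors c_1,…,c_d satisfies, as an inequality in [0,∞], ∏_{j=1}^d ‖c_j‖_{H_j^{−s}} ≤ C · ‖τ‖_{−s}. -/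
open scoped ENNReal
open Filter

/-! For `x_1, …, x_d ≥ λ₀ > 0` each `x_j` is at most `x_1 ⋯ x_d / λ₀^{d-1}`, hence
`x_1 + ⋯ + x_d ≤ (d / λ₀^{d-1}) x_1 ⋯ x_d`. With `x_j = λ_{j,ν_j}` and raised to the power `-s`,
this bounds `∏_j λ_{j,ν_j}^{-s}` by `C² λ_ν^{-s}`. Multiplying by `τ_ν² = ∏_j c_{j,ν_j}²` and
summing over `ν` gives the square of the claim, because the product of the `d` series
`∑_n λ_{j,n}^{-s} c_{j,n}²` expands into exactly that sum over `ν`. -/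

theorem ENNReal.tsum_fin_pi_prod_eq_prod_tsum {α : Type*} :
    ∀ (d : ℕ) (f : Fin d → α → ℝ≥0∞), ∑' ν : Fin d → α, ∏ j, f j (ν j) = ∏ j, ∑' a, f j a
  | 0, f => by simp
  | d + 1, f => by
    rw [← (Fin.consEquiv fun _ => α).tsum_eq, ENNReal.tsum_prod', Fin.prod_univ_succ,
      ← ENNReal.tsum_fin_pi_prod_eq_prod_tsum d, ← ENNReal.tsum_mul_right]
    simp [Fin.consEquiv, Fin.prod_univ_succ, ENNReal.tsum_mul_left]

namespace Finset

variable {ι : Type*} {s : Finset ι} {x : ι → ℝ} {a : ℝ}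

theorem mul_pow_card_sub_one_le_prod
    (ha : 0 ≤ a) (hx : ∀ i ∈ s, a ≤ x i) {j : ι} (hj : j ∈ s) :
    x j * a ^ (#s - 1) ≤ ∏ i ∈ s, x i := by
  classical
  rw [← mul_prod_erase s x hj, ← card_erase_of_mem hj, ← prod_const]
  have hxj : 0 ≤ x j := ha.trans (hx j hj)
  gcongr with i hi
  exact hx i (mem_of_mem_erase hi)

theorem sum_le_card_div_pow_mul_prod (ha : 0 < a) (hx : ∀ i ∈ s, a ≤ x i) :
    ∑ i ∈ s, x i ≤ #s / a ^ (#s - 1) * ∏ i ∈ s, x i := by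
  calc ∑ i ∈ s, x i ≤ ∑ _i ∈ s, (∏ i ∈ s, x i) / a ^ (#s - 1) :=
        sum_le_sum fun j hj ↦ (le_div_iff₀ (by positivity)).2 <|
          mul_pow_card_sub_one_le_prod ha.le hx hj
    _ = #s / a ^ (#s - 1) * ∏ i ∈ s, x i := by
        rw [sum_const, nsmul_eq_mul]
        ring

theorem prod_rpow_neg_le (hs : s.Nonempty) {p : ℝ}
    (ha : 0 < a) (hx : ∀ i ∈ s, a ≤ x i) (hp : 0 ≤ p) :
    (∏ i ∈ s, x i) ^ (-p) ≤ (#s / a ^ (#s - 1)) ^ p * (∑ i ∈ s, x i) ^ (-p) := by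
  set M : ℝ := #s / a ^ (#s - 1)
  have hx_pos : ∀ i ∈ s, 0 < x i := fun i hi ↦ ha.trans_le (hx i hi)
  have hM : 0 < M := by unfold M; positivity
  have hP : 0 < ∏ i ∈ s, x i := prod_pos hx_pos
  calc (∏ i ∈ s, x i) ^ (-p) = M ^ p * (M * ∏ i ∈ s, x i) ^ (-p) := by
        rw [Real.mul_rpow hM.le hP.le, ← mul_assoc, ← Real.rpow_add hM, add_neg_cancel,
          Real.rpow_zero, one_mul]
    _ ≤ M ^ p * (∑ i ∈ s, x i) ^ (-p) :=
        mul_le_mul_of_nonneg_left (Real.rpow_le_rpow_of_nonpos (sum_pos hx_pos hs)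
          (sum_le_card_div_pow_mul_prod ha hx) (neg_nonpos.2 hp)) (by positivity)

end Finset

theorem prod_hjnorm_eq_rpow_tsum_prod (d : ℕ) (lam : Fin d → ℕ → ℝ) (s : ℝ) (c : Fin d → ℕ → ℝ) :
    ∏ j, hjnorm d lam j s (c j)
      = (∑' ν : Fin d → ℕ, ∏ j, ENNReal.ofReal (lam j (ν j) ^ s * c j (ν j) ^ 2))
          ^ (1 / 2 : ℝ) := by
  rw [ENNReal.tsum_fin_pi_prod_eq_prod_tsum d fun j n ↦ ENNReal.ofReal (lam j n ^ s * c j n ^ 2),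
    ← ENNReal.prod_rpow_of_nonneg (by norm_num)]
  rfl

theorem prod_ofReal_rpow_neg_mul_sq_le {d : ℕ} (hd : 0 < d) {lam : Fin d → ℕ → ℝ} {a s : ℝ}
    (ha : 0 < a) (hlam : ∀ j n, a ≤ lam j n) (hs : 0 ≤ s) (c : Fin d → ℕ → ℝ) (ν : Fin d → ℕ) :
    ∏ j, ENNReal.ofReal (lam j (ν j) ^ (-s) * c j (ν j) ^ 2)
      ≤ ENNReal.ofReal ((d / a ^ (d - 1)) ^ s) *
          ENNReal.ofReal (lamNu d lam ν ^ (-s) * (∏ j, c j (ν j)) ^ 2) := by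
  have hlam_pos : ∀ j, 0 < lam j (ν j) := fun j ↦ ha.trans_le (hlam j (ν j))
  have hweight := Finset.prod_rpow_neg_le (Finset.univ_nonempty_iff.2 ⟨⟨0, hd⟩⟩)
    ha (fun j _ ↦ hlam j (ν j)) hs
  rw [Finset.card_univ, Fintype.card_fin] at hweight
  rw [← ENNReal.ofReal_prod_of_nonneg fun j _ ↦ by have := hlam_pos j; positivity,
    ← ENNReal.ofReal_mul (by positivity), Finset.prod_mul_distrib,
    Real.finsetProd_rpow _ _ fun j _ ↦ (hlam_pos j).le, Finset.prod_pow, ← mul_assoc]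
  gcongr
  exact hweight

theorem rank_one_dual_cross_norm_bound_general
    (d : ℕ) (hd : 0 < d) (lam : Fin d → ℕ → ℝ)
    (hpos : ∀ j n, 0 < lam j n) (hmono : ∀ j, Monotone (lam j))
    (s : ℝ) (hs : 0 ≤ s)
    (lam0 : ℝ) (hlam0 : IsLeast {x : ℝ | ∃ j : Fin d, x = lam j 0} lam0)
    (c : Fin d → ℕ → ℝ) (τ : (Fin d → ℕ) → ℝ)
    (hτ : ∀ ν, τ ν = ∏ j, c j (ν j)) :
    ∏ j : Fin d, hjnorm d lam j (-s) (c j)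
      ≤ ENNReal.ofReal (((d : ℝ) / lam0 ^ ((d : ℝ) - 1)) ^ (s / 2)) *
          hnorm d lam (-s) τ := by
  obtain ⟨j0, hj0⟩ := hlam0.1
  have ha : 0 < lam0 := hj0 ▸ hpos j0 0
  have hlam : ∀ j n, lam0 ≤ lam j n := fun j n ↦ (hlam0.2 ⟨j, rfl⟩).trans (hmono j n.zero_le)
  have hexp : lam0 ^ ((d : ℝ) - 1) = lam0 ^ (d - 1) := by
    rw [← Real.rpow_natCast, Nat.cast_sub hd, Nat.cast_one]
  rw [hexp]
  set M : ℝ := d / lam0 ^ (d - 1)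
  have hM : 0 ≤ M := by positivity
  calc ∏ j, hjnorm d lam j (-s) (c j)
      = (∑' ν : Fin d → ℕ, ∏ j, ENNReal.ofReal (lam j (ν j) ^ (-s) * c j (ν j) ^ 2))
          ^ (1 / 2 : ℝ) := prod_hjnorm_eq_rpow_tsum_prod d lam (-s) c
    _ ≤ (∑' ν : Fin d → ℕ,
          ENNReal.ofReal (M ^ s) * ENNReal.ofReal (lamNu d lam ν ^ (-s) * τ ν ^ 2))
          ^ (1 / 2 : ℝ) := by
        gcongr with ν
        rw [hτ]
        exact prod_ofReal_rpow_neg_mul_sq_le hd ha hlam hs c ν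
    _ = ENNReal.ofReal (M ^ (s / 2)) * hnorm d lam (-s) τ := by
        rw [ENNReal.tsum_mul_left, ENNReal.mul_rpow_of_nonneg _ _ (by norm_num),
          ENNReal.ofReal_rpow_of_nonneg (by positivity) (by norm_num), ← Real.rpow_mul hM,
          mul_one_div]
        rfl

/-- Corollary 3.3 of the paper, with an explicit constant:
with `λ₀ = min_j λ_{j,1}` and `C = (d/λ₀^{d−1})^{s/2}`, every rank-one tensor
`τ_ν = ∏_j c_j(ν_j)` satisfies `∏_j ‖c_j‖_{H_j^{−s}} ≤ C ‖τ‖_{−s}`. -/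
theorem rank_one_dual_cross_norm_bound
    (d : ℕ) (hd : 0 < d) (lam : Fin d → ℕ → ℝ)
    (hpos : ∀ j n, 0 < lam j n) (hmono : ∀ j, Monotone (lam j))
    (htend : ∀ j, Tendsto (lam j) atTop atTop)
    (s : ℝ) (hs : 0 ≤ s)
    (lam0 : ℝ) (hlam0 : IsLeast {x : ℝ | ∃ j : Fin d, x = lam j 0} lam0)
    (c : Fin d → ℕ → ℝ) (τ : (Fin d → ℕ) → ℝ)
    (hτ : ∀ ν, τ ν = ∏ j, c j (ν j)) :
    ∏ j : Fin d, hjnorm d lam j (-s) (c j)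
      ≤ ENNReal.ofReal (((d : ℝ) / lam0 ^ ((d : ℝ) - 1)) ^ (s / 2)) *
          hnorm d lam (-s) τ :=
  rank_one_dual_cross_norm_bound_general d hd lam hpos hmono s hs lam0 hlam0 c τ hτ
end

section
/- Let C > 0 and let s, s' ∈ ℝ with s' > s. Then the set T(s',C) := { τ ∈ H^{s'} : τ is a rank-one tensor and ‖τ‖_{s'} ≤ C } is a compact subset of the Hilbert space H^s. -/
open scoped ENNReal
open Filter

namespace lp

variable {ι : Type*}

theorem norm_le_of_forall_sum_sq_le {f : lp (fun _ : ι => ℝ) 2} {C : ℝ} (hC : 0 ≤ C)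
    (h : ∀ A : Finset ι, ∑ i ∈ A, f i ^ 2 ≤ C ^ 2) : ‖f‖ ≤ C :=
  lp.norm_le_of_forall_sum_le (by norm_num) hC fun A => by
    simpa only [ENNReal.toReal_ofNat, Real.rpow_two, Real.norm_eq_abs, sq_abs] using h A

theorem totallyBounded_of_tail_le {s : Set (lp (fun _ : ι => ℝ) 2)}
    (hcoord : ∀ i, ∃ B, ∀ x ∈ s, |x i| ≤ B)
    (htail : ∀ ε > 0, ∃ F : Finset ι, ∀ x ∈ s, ∀ A : Finset ι, Disjoint A F →
      ∑ i ∈ A, x i ^ 2 ≤ ε) :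
    TotallyBounded s := by
  classical
  choose B hB using hcoord
  refine Metric.totallyBounded_iff.2 fun ε hε => ?_
  obtain ⟨F, hF⟩ := htail ((ε / 2) ^ 2) (by positivity)
  set Φ : (ι → ℝ) → lp (fun _ : ι => ℝ) 2 := fun y => ∑ i ∈ F, lp.single 2 i (y i)
  have hΦ_apply (y : ι → ℝ) (j : ι) : Φ y j = if j ∈ F then y j else 0 := by
    simp only [Φ, lp.coeFn_sum, lp.coeFn_single, Finset.sum_apply, Finset.sum_pi_single]
  have hΦ_cont : Continuous Φ :=
    continuous_finsetSum _ fun i _ => (lp.isometry_single i).continuous.comp (continuous_apply i)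
  have hK : IsCompact (Φ '' Set.univ.pi fun i => Set.Icc (-B i) (B i)) :=
    (isCompact_univ_pi fun _ => isCompact_Icc).image hΦ_cont
  obtain ⟨t, ht, hcover⟩ := Metric.totallyBounded_iff.1 hK.totallyBounded (ε / 2) (by positivity)
  have hdist (x) (hx : x ∈ s) : dist x (Φ x) ≤ ε / 2 := by
    rw [dist_eq_norm]
    refine norm_le_of_forall_sum_sq_le (by positivity) fun A => ?_
    calc ∑ i ∈ A, (x - Φ x) i ^ 2 = ∑ i ∈ A \ F, x i ^ 2 := by
          simp only [lp.coeFn_sub, Pi.sub_apply, hΦ_apply, Finset.sdiff_eq_filter,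
            Finset.sum_filter]
          refine Finset.sum_congr rfl fun i _ => ?_
          split_ifs <;> simp
      _ ≤ (ε / 2) ^ 2 := hF x hx _ Finset.sdiff_disjoint
  refine ⟨t, ht, fun x hx => ?_⟩
  have hxK : Φ x ∈ Φ '' Set.univ.pi fun i => Set.Icc (-B i) (B i) :=
    Set.mem_image_of_mem Φ fun i _ => abs_le.1 (hB i x hx)
  obtain ⟨y, hyt, hy⟩ := Set.mem_iUnion₂.1 (hcover hxK)
  refine Set.mem_iUnion₂.2 ⟨y, hyt, ?_⟩
  calc dist x y ≤ dist x (Φ x) + dist (Φ x) y := dist_triangle _ _ _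
    _ < ε / 2 + ε / 2 := add_lt_add_of_le_of_lt (hdist x hx) hy
    _ = ε := add_halves ε

theorem totallyBounded_of_sum_mul_sq_le {w : ι → ℝ} (hw : Tendsto w cofinite atTop)
    (hw_pos : ∀ i, 0 < w i) {K : ℝ} {s : Set (lp (fun _ : ι => ℝ) 2)}
    (hs : ∀ x ∈ s, ∀ A : Finset ι, ∑ i ∈ A, w i * x i ^ 2 ≤ K) :
    TotallyBounded s := by
  refine totallyBounded_of_tail_le (fun i => ⟨√(K / w i), fun x hx => ?_⟩) fun ε hε => ?_
  · refine Real.abs_le_sqrt ((le_div_iff₀' (hw_pos i)).2 ?_)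
    simpa using hs x hx {i}
  · set M := max 1 (K / ε)
    have hM : 0 < M := lt_max_of_lt_left one_pos
    have hfin : {i | ¬M ≤ w i}.Finite := eventually_cofinite.1 (hw.eventually_ge_atTop M)
    obtain ⟨F, hF⟩ : ∃ F : Finset ι, ∀ i ∉ F, M ≤ w i :=
      ⟨hfin.toFinset, fun i hi => not_not.1 (mt hfin.mem_toFinset.2 hi)⟩
    refine ⟨F, fun x hx A hA => le_of_mul_le_mul_left ?_ hM⟩
    calc M * ∑ i ∈ A, x i ^ 2 = ∑ i ∈ A, M * x i ^ 2 := Finset.mul_sum _ _ _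
      _ ≤ ∑ i ∈ A, w i * x i ^ 2 := Finset.sum_le_sum fun i hi =>
          mul_le_mul_of_nonneg_right (hF i (Finset.disjoint_left.1 hA hi)) (sq_nonneg _)
      _ ≤ K := hs x hx A
      _ ≤ M * ε := (div_le_iff₀ hε).1 (le_max_right _ _)

theorem isClosed_setOf_exists_coe_eq_mul {p : ℝ≥0∞} [Fact (1 ≤ p)] {a : ι → ℝ}
    (ha : ∀ i, a i ≠ 0) {T : Set (ι → ℝ)} (hT : IsClosed T) :
    IsClosed {x : lp (fun _ : ι => ℝ) p | ∃ τ ∈ T, ∀ i, x i = a i * τ i} := by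
  have hcont : Continuous fun (x : lp (fun _ : ι => ℝ) p) i => x i / a i :=
    continuous_pi fun i =>
      ((continuous_apply i).comp lp.uniformContinuous_coe.continuous).div_const _
  convert hT.preimage hcont using 1
  ext x
  constructor
  · rintro ⟨τ, hτ, hx⟩
    have : (fun i => x i / a i) = τ := funext fun i => by simp [hx i, ha i]
    rwa [Set.mem_preimage, this]
  · intro hx
    exact ⟨_, hx, fun i => (mul_div_cancel₀ _ (ha i)).symm⟩

end lp

section SequenceModel

variable {d : ℕ} {lam : Fin d → ℕ → ℝ}

theorem lamNu_pos (hd : 0 < d) (hpos : ∀ j n, 0 < lam j n) (ν : Fin d → ℕ) :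
    0 < lamNu d lam ν :=
  Finset.sum_pos (fun j _ => hpos j (ν j)) ⟨⟨0, hd⟩, Finset.mem_univ _⟩

theorem tendsto_lamNu_cofinite (hpos : ∀ j n, 0 < lam j n)
    (htend : ∀ j, Tendsto (lam j) atTop atTop) : Tendsto (lamNu d lam) cofinite atTop := by
  refine tendsto_atTop.2 fun R => eventually_cofinite.2 ?_
  have hfin (j : Fin d) : {n | ¬R ≤ lam j n}.Finite := by
    rw [← Nat.cofinite_eq_atTop] at htend
    exact eventually_cofinite.1 ((htend j).eventually_ge_atTop R)
  refine (Set.Finite.pi hfin).subset fun ν hν j _ => fun hj => hν (hj.trans ?_)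
  exact Finset.single_le_sum (f := fun i => lam i (ν i)) (fun i _ => (hpos i (ν i)).le)
    (Finset.mem_univ j)

theorem sum_rpow_mul_sq_le_of_hnorm_le (hd : 0 < d) (hpos : ∀ j n, 0 < lam j n) {t C : ℝ}
    {v : (Fin d → ℕ) → ℝ} (h : hnorm d lam t v ≤ ENNReal.ofReal C) (A : Finset (Fin d → ℕ)) :
    ∑ ν ∈ A, lamNu d lam ν ^ t * v ν ^ 2 ≤ C ^ 2 := by
  have hterm (ν) : 0 ≤ lamNu d lam ν ^ t * v ν ^ 2 :=
    mul_nonneg (Real.rpow_nonneg (lamNu_pos hd hpos ν).le t) (sq_nonneg _)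
  have hsq : hnorm d lam t v ^ 2 = ∑' ν, ENNReal.ofReal (lamNu d lam ν ^ t * v ν ^ 2) := by
    rw [hnorm, ← ENNReal.rpow_natCast, ← ENNReal.rpow_mul]
    norm_num
  refine (ENNReal.ofReal_le_ofReal_iff (sq_nonneg C)).1 ?_
  calc ENNReal.ofReal (∑ ν ∈ A, lamNu d lam ν ^ t * v ν ^ 2)
      = ∑ ν ∈ A, ENNReal.ofReal (lamNu d lam ν ^ t * v ν ^ 2) :=
        ENNReal.ofReal_sum_of_nonneg fun ν _ => hterm ν
    _ ≤ hnorm d lam t v ^ 2 := hsq ▸ ENNReal.sum_le_tsum A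
    _ ≤ ENNReal.ofReal |C| ^ 2 := by
        gcongr
        exact h.trans (ENNReal.ofReal_le_ofReal (le_abs_self C))
    _ = ENNReal.ofReal (C ^ 2) := by rw [← ENNReal.ofReal_pow (abs_nonneg C), sq_abs]

theorem isClosed_setOf_hnorm_le (t : ℝ) (c : ℝ≥0∞) :
    IsClosed {v : (Fin d → ℕ) → ℝ | hnorm d lam t v ≤ c} := by
  have hsum : LowerSemicontinuous fun v : (Fin d → ℕ) → ℝ =>
      ∑' ν, ENNReal.ofReal (lamNu d lam ν ^ t * v ν ^ 2) :=
    lowerSemicontinuous_tsum fun ν => (ENNReal.continuous_ofReal.comp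
      (by fun_prop)).lowerSemicontinuous
  exact ((ENNReal.continuous_rpow_const.comp_lowerSemicontinuous hsum
    (ENNReal.monotone_rpow_of_nonneg (by norm_num))).isClosed_preimage c)

end SequenceModel

section RankOne

variable {d : ℕ} {τ : (Fin d → ℕ) → ℝ}

theorem IsRankOne.mul_pow_eq_prod_update (h : IsRankOne d τ) (p q : Fin d → ℕ) :
    τ q * τ p ^ (d - 1) = ∏ j, τ (Function.update p j (q j)) := by
  obtain ⟨c, hc⟩ := h
  simp only [hc]
  rw [Finset.prod_comm, ← Finset.prod_pow, ← Finset.prod_mul_distrib]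
  refine Finset.prod_congr rfl fun i _ => ?_
  rw [Fintype.prod_eq_mul_prod_compl i, Function.update_self,
    Finset.prod_congr rfl fun j hj => by
      rw [Function.update_of_ne (Ne.symm (Finset.mem_compl.1 hj ∘ Finset.mem_singleton.2))],
    Finset.prod_const, Finset.card_compl, Finset.card_singleton, Fintype.card_fin]

theorem isRankOne_of_mul_pow_eq_prod_update (hd : 0 < d)
    (h : ∀ p q, τ q * τ p ^ (d - 1) = ∏ j, τ (Function.update p j (q j))) :
    IsRankOne d τ := by
  classical
  by_cases h0 : ∀ ν, τ ν = 0
  · exact ⟨fun _ _ => 0, fun ν =>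
      (h0 ν).trans (Finset.prod_eq_zero (Finset.mem_univ ⟨0, hd⟩) rfl).symm⟩
  obtain ⟨p, hp⟩ := not_forall.1 h0
  -- the factor `τ p ^ (d - 1)` overcounted by the identity is divided out of one factor only
  let j₀ : Fin d := ⟨0, hd⟩
  refine ⟨fun j n => τ (Function.update p j n) * if j = j₀ then (τ p ^ (d - 1))⁻¹ else 1,
    fun ν => ?_⟩
  rw [Finset.prod_mul_distrib, Finset.prod_ite_eq' Finset.univ j₀, if_pos (Finset.mem_univ _),
    ← h p ν, mul_inv_cancel_right₀ (pow_ne_zero _ hp)]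

theorem isRankOne_iff_mul_pow_eq_prod_update (hd : 0 < d) :
    IsRankOne d τ ↔ ∀ p q, τ q * τ p ^ (d - 1) = ∏ j, τ (Function.update p j (q j)) :=
  ⟨IsRankOne.mul_pow_eq_prod_update, isRankOne_of_mul_pow_eq_prod_update hd⟩

theorem isClosed_setOf_isRankOne (hd : 0 < d) : IsClosed {τ | IsRankOne d τ} := by
  simp only [isRankOne_iff_mul_pow_eq_prod_update hd, Set.ofPred_forall]
  exact isClosed_iInter fun p => isClosed_iInter fun q => isClosed_eq (by fun_prop) (by fun_prop)

end RankOne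

/-- `H^s` is realized isometrically inside `ℓ²(ℕ^d)` via `x_ν = λ_ν^{s/2} τ_ν`. -/
theorem rank_one_bounded_set_is_compact_general
    (d : ℕ) (hd : 0 < d) (lam : Fin d → ℕ → ℝ)
    (hpos : ∀ j n, 0 < lam j n)
    (htend : ∀ j, Tendsto (lam j) atTop atTop)
    (C : ℝ) (s s' : ℝ) (hss : s < s') :
    IsCompact {x : lp (fun _ : Fin d → ℕ => ℝ) 2 |
      ∃ τ : (Fin d → ℕ) → ℝ, IsRankOne d τ ∧
        hnorm d lam s' τ ≤ ENNReal.ofReal C ∧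
        ∀ ν, (x : ∀ _ : Fin d → ℕ, ℝ) ν = lamNu d lam ν ^ (s / 2) * τ ν} := by
  have hlam := lamNu_pos hd hpos
  refine TotallyBounded.isCompact_of_isClosed ?_ ?_
  · have hweight (ν) (t : ℝ) : lamNu d lam ν ^ (s' - s) * (lamNu d lam ν ^ (s / 2) * t) ^ 2 =
        lamNu d lam ν ^ s' * t ^ 2 := by
      rw [mul_pow, ← Real.rpow_natCast, ← Real.rpow_mul (hlam ν).le, ← mul_assoc,
        ← Real.rpow_add (hlam ν)]
      norm_num
    refine lp.totallyBounded_of_sum_mul_sq_le (K := C ^ 2)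
      ((tendsto_rpow_atTop (sub_pos.2 hss)).comp (tendsto_lamNu_cofinite hpos htend))
      (fun ν => Real.rpow_pos_of_pos (hlam ν) _) ?_
    rintro x ⟨τ, -, hτ, hx⟩ A
    simpa only [Function.comp_apply, hx, hweight] using
      sum_rpow_mul_sq_le_of_hnorm_le hd hpos hτ A
  · simpa only [Set.mem_inter_iff, Set.mem_ofPred_eq, and_assoc] using
      lp.isClosed_setOf_exists_coe_eq_mul (fun ν => (Real.rpow_pos_of_pos (hlam ν) (s / 2)).ne')
        ((isClosed_setOf_isRankOne hd).inter (isClosed_setOf_hnorm_le (lam := lam) s' _))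

/-- Lemma 3.4 of the paper: the set `T(s',C)` of rank-one tensors `τ` with
`‖τ‖_{s'} ≤ C` is a compact subset of `H^s` whenever `s' > s`.  Here `H^s` is realized
(isometrically) inside `ℓ²(ℕ^d)` via the weighting `x_ν = λ_ν^{s/2} τ_ν`. -/
theorem rank_one_bounded_set_is_compact
    (d : ℕ) (hd : 0 < d) (lam : Fin d → ℕ → ℝ)
    (hpos : ∀ j n, 0 < lam j n) (hmono : ∀ j, Monotone (lam j))
    (htend : ∀ j, Tendsto (lam j) atTop atTop)
    (C : ℝ) (hC : 0 < C) (s s' : ℝ) (hss : s < s') :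
    IsCompact {x : lp (fun _ : Fin d → ℕ => ℝ) 2 |
      ∃ τ : (Fin d → ℕ) → ℝ, IsRankOne d τ ∧
        hnorm d lam s' τ ≤ ENNReal.ofReal C ∧
        ∀ ν, (x : ∀ _ : Fin d → ℕ, ℝ) ν = lamNu d lam ν ^ (s / 2) * τ ν} :=
  rank_one_bounded_set_is_compact_general d hd lam hpos htend C s s' hss
end

section
/- Let α > 0, ζ ∈ (0,2] and C₀ ≥ 8, and let γ(r) := e^{αr} for r ≥ 0. With C₁(ζ) := 4/(πζ)², R(r) := ⌈C₁(ζ)·(log(C₀·e^{αr}))²⌉ for r ≥ 1, and γ̂ defined by γ̂(m) := γ(r) = e^{αr} for r·R(r) ≤ m < (r+1)·R(r+1) (r ≥ 1) and γ̂(m) := 1 for 0 ≤ m < R(1), there exists a constant C > 0, depending only on α, ζ and C₀, such that γ̂(m) ≥ e^{(αm/C)^{1/3}} for all m ≥ R(1). -/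
/-!
Since `|log (C₀ e^{αr})| ≤ |log C₀| + αr` is linear in `r`, the window length `R(r)` grows at most
quadratically, so the whole window `m < (r+1)·R(r+1)` lies below `K r³` for a constant `K`.
Hence `(αm/C)^{1/3} ≤ αr` once `C = K/α²`.
-/

/-- `R(r) = ⌈(4/(πζ)²)·(log(C₀ e^{αr}))²⌉`. -/
noncomputable def Rtemp (α ζ C0 : ℝ) (r : ℕ) : ℕ :=
  ⌈(4 / (Real.pi * ζ) ^ 2) * (Real.log (C0 * Real.exp (α * r))) ^ 2⌉₊

open Real

lemma abs_log_mul_exp_le (c x : ℝ) : |log (c * exp x)| ≤ |log c| + |x| := by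
  rcases eq_or_ne c 0 with rfl | hc
  · simp only [zero_mul, log_zero, abs_zero]
    positivity
  · rw [log_mul hc (exp_ne_zero x), log_exp]
    exact abs_add_le _ _

lemma Rtemp_le_mul_sq {α : ℝ} (ζ C0 : ℝ) (hα : 0 ≤ α) {r : ℕ} (hr : 1 ≤ r) :
    (Rtemp α ζ C0 r : ℝ) ≤ (4 / (π * ζ) ^ 2 * (|log C0| + α) ^ 2 + 1) * r ^ 2 := by
  have hr1 : (1 : ℝ) ≤ r := by exact_mod_cast hr
  have hlog : |log (C0 * exp (α * r))| ≤ (|log C0| + α) * r := by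
    calc |log (C0 * exp (α * r))| ≤ |log C0| + |α * r| := abs_log_mul_exp_le _ _
      _ = |log C0| + α * r := by rw [abs_of_nonneg (by positivity : 0 ≤ α * r)]
      _ ≤ (|log C0| + α) * r := by nlinarith [abs_nonneg (log C0)]
  have hsq : log (C0 * exp (α * r)) ^ 2 ≤ ((|log C0| + α) * r) ^ 2 := by
    rw [← sq_abs]
    exact pow_le_pow_left₀ (abs_nonneg _) hlog 2
  have hceil : (Rtemp α ζ C0 r : ℝ) < 4 / (π * ζ) ^ 2 * log (C0 * exp (α * r)) ^ 2 + 1 :=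
    Nat.ceil_lt_add_one (by positivity)
  have hC1 : 0 ≤ 4 / (π * ζ) ^ 2 := by positivity
  nlinarith [mul_le_mul_of_nonneg_left hsq hC1]

lemma cast_le_cube_of_lt_mul_Rtemp_succ {α : ℝ} (ζ C0 : ℝ) (hα : 0 ≤ α) {r m : ℕ} (hr : 1 ≤ r)
    (hm : m < (r + 1) * Rtemp α ζ C0 (r + 1)) :
    (m : ℝ) ≤ 8 * (4 / (π * ζ) ^ 2 * (|log C0| + α) ^ 2 + 1) * r ^ 3 := by
  set K := 4 / (π * ζ) ^ 2 * (|log C0| + α) ^ 2 + 1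
  have hK : 0 ≤ K := by positivity
  have hr1 : (1 : ℝ) ≤ r := by exact_mod_cast hr
  have hR := Rtemp_le_mul_sq ζ C0 hα (Nat.le_add_left 1 r)
  push_cast at hR
  have hm' : (m : ℝ) < (r + 1) * Rtemp α ζ C0 (r + 1) := by exact_mod_cast hm
  calc (m : ℝ) ≤ (r + 1) * (K * (r + 1) ^ 2) := hm'.le.trans (by gcongr)
    _ = K * (r + 1) ^ 3 := by ring
    _ ≤ K * (2 * r) ^ 3 := by gcongr; linarith
    _ = 8 * K * r ^ 3 := by ring

lemma rpow_one_third_le_of_le_pow_three {x y : ℝ} (hx : 0 ≤ x) (hy : 0 ≤ y) (h : y ≤ x ^ 3) :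
    y ^ ((1 : ℝ) / 3) ≤ x := by
  rw [one_div, rpow_inv_le_iff_of_pos hy hx (by norm_num)]
  exact_mod_cast h

theorem tempered_sequence_exponential_growth_general
    (α ζ C0 : ℝ) (hα : 0 < α) :
    ∃ C : ℝ, 0 < C ∧
      ∀ r : ℕ, 1 ≤ r → ∀ m : ℕ,
        r * Rtemp α ζ C0 r ≤ m → m < (r + 1) * Rtemp α ζ C0 (r + 1) →
        Real.exp ((α * m / C) ^ ((1 : ℝ) / 3)) ≤ Real.exp (α * r) := by
  set K := 4 / (π * ζ) ^ 2 * (|log C0| + α) ^ 2 + 1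
  have hK : 0 < K := by positivity
  refine ⟨8 * K / α ^ 2, by positivity, fun r hr m _ hm => ?_⟩
  have hmK := cast_le_cube_of_lt_mul_Rtemp_succ ζ C0 hα.le hr hm
  rw [exp_le_exp]
  apply rpow_one_third_le_of_le_pow_three (by positivity) (by positivity)
  rw [div_div_eq_mul_div, div_le_iff₀ (by positivity)]
  calc α * m * α ^ 2 = α ^ 3 * m := by ring
    _ ≤ α ^ 3 * (8 * K * r ^ 3) := by gcongr
    _ = (α * r) ^ 3 * (8 * K) := by ring

theorem tempered_sequence_exponential_growth
    (α ζ C0 : ℝ) (hα : 0 < α) (hζ0 : 0 < ζ) (hζ2 : ζ ≤ 2) (hC0 : 8 ≤ C0) :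
    ∃ C : ℝ, 0 < C ∧
      ∀ r : ℕ, 1 ≤ r → ∀ m : ℕ,
        r * Rtemp α ζ C0 r ≤ m → m < (r + 1) * Rtemp α ζ C0 (r + 1) →
        Real.exp ((α * m / C) ^ ((1 : ℝ) / 3)) ≤ Real.exp (α * r) :=
  tempered_sequence_exponential_growth_general α ζ C0 hα
end
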